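/- Let α be a Lebesgue (1,∞)-atom on ℝⁿ associated to a ball B' admissible at scale 2 (supp α ⊆ B', ∫α dλ = 0, ‖α‖_∞ ≤ λ(B')^{-1}). Then a := α/γ₀ satisfies ∫ a dγ = 0 and ‖a‖_{L^∞} ≤ C·γ(B')^{-1}; that is, a is C times a Gaussian (1,∞)-atom (at scale 2), with C depending only on n. -/

import Mathlib

open MeasureTheory
open scoped ENNReal

/-- Gaussian density `γ₀(x) = π^{-n/2} e^{-|x|²}` on ℝⁿ. -/
noncomputable def gaussDensity (n : ℕ) (x : EuclideanSpace ℝ (Fin n)) : ℝ :=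
  Real.pi ^ (-(n : ℝ) / 2) * Real.exp (-‖x‖ ^ 2)

/-- The Gauss measure `γ` on ℝⁿ. -/
noncomputable def gaussMeasure (n : ℕ) : Measure (EuclideanSpace ℝ (Fin n)) :=
  volume.withDensity fun x => ENNReal.ofReal (gaussDensity n x)

/-- `mrad t = min(1, 1/t)`, equal to `1` when `t ≤ 1`. -/
noncomputable def mrad (t : ℝ) : ℝ := if t ≤ 1 then 1 else 1 / t

/-!
On an admissible ball `B = B(c, r)` the weight `‖x‖²` oscillates by at most
`4r(‖c‖ + r) = 4r‖c‖ + 4r² ≤ 8 + 16 = 24`, so the Gaussian density `γ₀` is comparable to a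
constant on `B` up to the factor `e²⁴`. Hence `γ(B) ≤ e²⁴ γ₀(x) λ(B)` for every `x ∈ B`, which turns
`‖α‖_∞ ≤ λ(B)⁻¹` into `|α / γ₀| ≤ e²⁴ γ(B)⁻¹`, while `∫ (α / γ₀) dγ = ∫ α dλ = 0` because `γ₀` is
the density of `γ`.
-/

open Metric

lemma mrad_le_one (t : ℝ) : mrad t ≤ 1 := by
  unfold mrad
  split_ifs with h
  · rfl
  · rw [div_le_one (by linarith)]
    linarith

lemma mul_mrad_le_one (t : ℝ) : t * mrad t ≤ 1 := by
  unfold mrad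
  split_ifs with h
  · linarith
  · rw [mul_one_div_cancel (by linarith)]

lemma sq_norm_le_sq_norm_add_of_mem_closedBall {E : Type*} [SeminormedAddCommGroup E]
    {c x y : E} {r : ℝ} (hx : x ∈ closedBall c r) (hy : y ∈ closedBall c r) :
    ‖x‖ ^ 2 ≤ ‖y‖ ^ 2 + 4 * r * (‖c‖ + r) := by
  have hr0 : 0 ≤ r := nonempty_closedBall.1 ⟨x, hx⟩
  have hx' : ‖x‖ ≤ ‖c‖ + r := norm_le_of_mem_closedBall hx
  have hy' : ‖y‖ ≤ ‖c‖ + r := norm_le_of_mem_closedBall hy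
  have hxy : ‖x‖ - ‖y‖ ≤ 2 * r :=
    (norm_sub_norm_le x y).trans <| by
      rw [← dist_eq_norm]
      linarith [dist_triangle_right x y c, mem_closedBall.1 hx, mem_closedBall.1 hy]
  rcases le_total ‖x‖ ‖y‖ with hle | hle
  · nlinarith [pow_le_pow_left₀ (norm_nonneg x) hle 2, norm_nonneg c]
  · nlinarith [mul_le_mul hxy (add_le_add hx' hy') (by positivity) (by linarith)]

lemma sq_norm_le_sq_norm_add_of_le_two_mul_mrad {E : Type*} [SeminormedAddCommGroup E]
    {c x y : E} {r : ℝ} (hr : r ≤ 2 * mrad ‖c‖) (hx : x ∈ closedBall c r)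
    (hy : y ∈ closedBall c r) :
    ‖x‖ ^ 2 ≤ ‖y‖ ^ 2 + 24 := by
  have hr0 : 0 ≤ r := nonempty_closedBall.1 ⟨x, hx⟩
  have hr2 : r ≤ 2 := by linarith [mrad_le_one ‖c‖]
  have hrc : r * ‖c‖ ≤ 2 := by nlinarith [mul_mrad_le_one ‖c‖, norm_nonneg c]
  nlinarith [sq_norm_le_sq_norm_add_of_mem_closedBall hx hy]

lemma gaussDensity_pos (n : ℕ) (x : EuclideanSpace ℝ (Fin n)) : 0 < gaussDensity n x := by
  unfold gaussDensity
  positivity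

lemma continuous_gaussDensity (n : ℕ) : Continuous (gaussDensity n) := by
  unfold gaussDensity
  fun_prop

lemma measurable_ofReal_gaussDensity (n : ℕ) :
    Measurable fun x => ENNReal.ofReal (gaussDensity n x) :=
  ENNReal.measurable_ofReal.comp (continuous_gaussDensity n).measurable

lemma gaussDensity_le_exp_mul {n : ℕ} {x y : EuclideanSpace ℝ (Fin n)} {K : ℝ}
    (h : ‖x‖ ^ 2 ≤ ‖y‖ ^ 2 + K) : gaussDensity n y ≤ Real.exp K * gaussDensity n x := by
  unfold gaussDensity
  rw [mul_left_comm, ← Real.exp_add]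
  gcongr
  linarith

lemma integral_div_gaussDensity (n : ℕ) (f : EuclideanSpace ℝ (Fin n) → ℝ) :
    ∫ x, f x / gaussDensity n x ∂gaussMeasure n = ∫ x, f x := by
  rw [gaussMeasure, integral_withDensity_eq_integral_toReal_smul (measurable_ofReal_gaussDensity n)
    (.of_forall fun _ => ENNReal.ofReal_lt_top)]
  congr 1 with x
  rw [ENNReal.toReal_ofReal (gaussDensity_pos n x).le, smul_eq_mul,
    mul_div_cancel₀ _ (gaussDensity_pos n x).ne']

lemma gaussMeasure_le_ofReal_mul_volume {n : ℕ} {s : Set (EuclideanSpace ℝ (Fin n))}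
    (hs : MeasurableSet s) {M : ℝ} (hM : ∀ y ∈ s, gaussDensity n y ≤ M) :
    gaussMeasure n s ≤ ENNReal.ofReal M * volume s := by
  rw [gaussMeasure, withDensity_apply _ hs, ← setLIntegral_const]
  exact setLIntegral_mono' hs fun y hy => ENNReal.ofReal_le_ofReal (hM y hy)

lemma gaussMeasure_eq_zero_iff {n : ℕ} {s : Set (EuclideanSpace ℝ (Fin n))} :
    gaussMeasure n s = 0 ↔ volume s = 0 := by
  rw [gaussMeasure, withDensity_apply_eq_zero (measurable_ofReal_gaussDensity n)]
  simp [gaussDensity_pos]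

section AdmissibleBall

variable {n : ℕ} {c x : EuclideanSpace ℝ (Fin n)} {r : ℝ}

lemma gaussMeasure_closedBall_le (hr : r ≤ 2 * mrad ‖c‖) (hx : x ∈ closedBall c r) :
    gaussMeasure n (closedBall c r) ≤
      ENNReal.ofReal (Real.exp 24 * gaussDensity n x) * volume (closedBall c r) :=
  gaussMeasure_le_ofReal_mul_volume measurableSet_closedBall
    fun _ hy => gaussDensity_le_exp_mul (sq_norm_le_sq_norm_add_of_le_two_mul_mrad hr hx hy)

lemma gaussMeasure_closedBall_toReal_le (hr : r ≤ 2 * mrad ‖c‖) (hx : x ∈ closedBall c r) :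
    (gaussMeasure n (closedBall c r)).toReal ≤
      Real.exp 24 * gaussDensity n x * (volume (closedBall c r)).toReal := by
  have := ENNReal.toReal_mono (ENNReal.mul_ne_top ENNReal.ofReal_ne_top
    measure_closedBall_lt_top.ne) (gaussMeasure_closedBall_le hr hx)
  rwa [ENNReal.toReal_mul, ENNReal.toReal_ofReal (by positivity [gaussDensity_pos n x])] at this

lemma inv_volume_div_gaussDensity_le (hr0 : 0 < r) (hr : r ≤ 2 * mrad ‖c‖)
    (hx : x ∈ closedBall c r) :
    (volume (closedBall c r)).toReal⁻¹ / gaussDensity n x ≤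
      Real.exp 24 * (gaussMeasure n (closedBall c r)).toReal⁻¹ := by
  have hγ_ne_zero : gaussMeasure n (closedBall c r) ≠ 0 :=
    gaussMeasure_eq_zero_iff.not.2 (measure_closedBall_pos volume c hr0).ne'
  have hγ_ne_top : gaussMeasure n (closedBall c r) ≠ ⊤ :=
    ne_top_of_le_ne_top (ENNReal.mul_ne_top ENNReal.ofReal_ne_top measure_closedBall_lt_top.ne)
      (gaussMeasure_closedBall_le hr hx)
  have hγ_pos := ENNReal.toReal_pos hγ_ne_zero hγ_ne_top
  have hg := gaussDensity_pos n x
  calc (volume (closedBall c r)).toReal⁻¹ / gaussDensity n x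
      = Real.exp 24 * (Real.exp 24 * gaussDensity n x * (volume (closedBall c r)).toReal)⁻¹ := by
        field_simp
    _ ≤ Real.exp 24 * (gaussMeasure n (closedBall c r)).toReal⁻¹ := by
        gcongr
        exact gaussMeasure_closedBall_toReal_le hr hx

end AdmissibleBall

theorem stmt_17 (n : ℕ) :
    ∃ C > 0, ∀ (c' : EuclideanSpace ℝ (Fin n)) (r : ℝ)
      (α : EuclideanSpace ℝ (Fin n) → ℝ),
      0 < r → r ≤ 2 * mrad ‖c'‖ →
      Function.support α ⊆ Metric.closedBall c' r →
      Integrable α volume →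
      (∫ x, α x) = 0 →
      (∀ x, |α x| ≤ ((volume (Metric.closedBall c' r)).toReal)⁻¹) →
      (∫ x, α x / gaussDensity n x ∂gaussMeasure n) = 0 ∧
        ∀ x, |α x / gaussDensity n x| ≤
          C * ((gaussMeasure n (Metric.closedBall c' r)).toReal)⁻¹ := by
  refine ⟨Real.exp 24, Real.exp_pos _, fun c' r α hr0 hr hsupp _ hzero hbound => ⟨?_, fun x => ?_⟩⟩
  · rw [integral_div_gaussDensity, hzero]
  by_cases hαx : α x = 0
  · rw [hαx, zero_div, abs_zero]
    positivity
  calc |α x / gaussDensity n x| = |α x| / gaussDensity n x := by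
        rw [abs_div, abs_of_pos (gaussDensity_pos n x)]
    _ ≤ (volume (closedBall c' r)).toReal⁻¹ / gaussDensity n x :=
        div_le_div_of_nonneg_right (hbound x) (gaussDensity_pos n x).le
    _ ≤ _ := inv_volume_div_gaussDensity_le hr0 hr (hsupp hαx)
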